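/- Let γ ∈ (0,1) and let φ : ℍ → ℂ be injective holomorphic with φ(ℍ) ⊂ {z : |z| > e^γ}, satisfying condition (4.2) with constant M ≥ 1 and threshold γ, and suppose there exists a holomorphic L : ℍ → ℂ with exp∘L = φ. Assume φ satisfies a balanced growth condition: there exist ρ > 0 and constants 0 < c ≤ C such that c·|φ(ξ)|^{1−ρ} ≤ |φ′(ξ)| ≤ C·|φ(ξ)|^{1−ρ} for every ξ ∈ ℍ. Then β_∞(t) = 0 for every t ∈ ℝ; consequently b_∞(t) = 1 − t for all t, and Θ = 1. -/

import Mathlib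

open Complex Set Filter Topology MeasureTheory

noncomputable section

/-- The open right half-plane `ℍ = {z ∈ ℂ : Re z > 0}`. -/
def HalfPlane : Set ℂ := {z : ℂ | 0 < z.re}

/-- The open rectangle `Q_T = {ξ ∈ ℂ : 0 < Re ξ < 4T and −4T < Im ξ < 4T}`. -/
def Q (T : ℝ) : Set ℂ := {z : ℂ | 0 < z.re ∧ z.re < 4 * T ∧ -(4 * T) < z.im ∧ z.im < 4 * T}

/-- Condition (4.2) with constant `M` and threshold `γ`:
`|φ(ξ)| ≤ M·|φ(ξ′)|` for every `T ≥ γ` and all `ξ, ξ′ ∈ Q_T \ Q_{T/8}`. -/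
def Cond42 (φ : ℂ → ℂ) (M γ : ℝ) : Prop :=
  ∀ T : ℝ, γ ≤ T → ∀ ξ ∈ Q T \ Q (T / 8), ∀ ξ' ∈ Q T \ Q (T / 8),
    ‖φ ξ‖ ≤ M * ‖φ ξ'‖

/-- The rescaled map `φ_T(z) = φ(Tz)/|φ(T)|`. -/
def resc (φ : ℂ → ℂ) (T : ℝ) : ℂ → ℂ :=
  fun z => φ ((T : ℂ) * z) / ((‖φ (T : ℂ)‖ : ℝ) : ℂ)

/-- The set `I = [−2,−1] ∪ [1,2]`. -/
def Iset : Set ℝ := Icc (-2 : ℝ) (-1) ∪ Icc (1 : ℝ) 2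

/-- The integral means `β_{φ_T}(r,t) = log(∫_I |φ_T′(r+iy)|^t dy) / log(1/r)`. -/
def betaT (φ : ℂ → ℂ) (T r t : ℝ) : ℝ :=
  Real.log (∫ y in Iset,
      (‖deriv (resc φ T) ((r : ℂ) + (y : ℂ) * Complex.I)‖) ^ t) /
    Real.log (1 / r)

/-- The integral means spectrum at infinity `β_∞(t) = limsup_{T→+∞} β_{φ_T}(1/T, t)`. -/
def betaInf (φ : ℂ → ℂ) (t : ℝ) : ℝ :=
  Filter.limsup (fun T : ℝ => betaT φ T (1 / T) t) Filter.atTop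

/-- The function `b_∞(t) = β_∞(t) − t + 1`. -/
def bInf (φ : ℂ → ℂ) (t : ℝ) : ℝ := betaInf φ t - t + 1

/-- `Θ = inf{t > 0 : b_∞(t) ≤ 0}`. -/
def Theta (φ : ℂ → ℂ) : ℝ := sInf {t : ℝ | 0 < t ∧ bInf φ t ≤ 0}

/-! Write `φ = e^L`, so that balanced growth reads `|L'| ≍ e^{-ρ Re L}`. Integrating `(e^{ρL})'`
from `1` to `T` gives `|φ(T)|^ρ = O(T)`; Schwarz's lemma for `L`, which maps `ℍ` into `ℍ`, gives
`|L'(T)| ≤ 2 Re L(T) / T` and hence `T = O(log |φ(T)| · |φ(T)|^ρ)`. Together,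
`ρ log |φ(T)| ~ log T`.

The point `T (1/T + iy) = 1 + iTy`, `y ∈ I`, lies in `Q_T \ Q_{T/8}`, so by (4.2) and balanced
growth `|φ_T'(1/T + iy)| = T |φ'(1 + iTy)| / |φ(T)|` equals `T |φ(T)|^{-ρ}` up to a bounded
factor. Hence
`β_{φ_T}(1/T, t) = t (1 - ρ log |φ(T)| / log T) + O(1 / log T) → 0`. -/

open ComplexConjugate

lemma halfPlane_isOpen : IsOpen HalfPlane := isOpen_lt continuous_const continuous_re

lemma halfPlane_convex : Convex ℝ HalfPlane := convex_halfSpace_re_gt 0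

lemma ofReal_mem_halfPlane {T : ℝ} (hT : 0 < T) : (T : ℂ) ∈ HalfPlane := by
  simpa [HalfPlane] using hT

lemma ball_re_subset_halfPlane (z : ℂ) : Metric.ball z z.re ⊆ HalfPlane := fun w hw => by
  have := (abs_re_le_norm (z - w)).trans_lt (by rwa [Metric.mem_ball, dist_comm, dist_eq] at hw)
  simp only [sub_re] at this
  show 0 < w.re
  linarith [le_abs_self (z.re - w.re)]

lemma norm_sub_div_add_conj_lt_one {a w : ℂ} (ha : 0 < a.re) (hw : 0 < w.re) :
    ‖(w - a) / (w + conj a)‖ < 1 := by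
  have hden : 0 < ‖w + conj a‖ := norm_pos_iff.2 fun h => by
    have := congrArg re h
    simp only [add_re, conj_re, zero_re] at this
    linarith
  rw [norm_div, div_lt_one hden, ← sq_lt_sq₀ (norm_nonneg _) hden.le, Complex.sq_norm,
    Complex.sq_norm, normSq_apply, normSq_apply]
  simp only [sub_re, sub_im, add_re, add_im, conj_re, conj_im]
  nlinarith [mul_pos ha hw]

/-- Schwarz's lemma applied to `f` followed by the Cayley map `w ↦ (w - f z) / (w + conj (f z))`,
which sends the right half-plane into the unit disc. -/
lemma norm_deriv_le_of_re_pos_on_ball {f : ℂ → ℂ} {z : ℂ} {R : ℝ} (hR : 0 < R)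
    (hf : DifferentiableOn ℂ f (Metric.ball z R)) (hre : ∀ w ∈ Metric.ball z R, 0 < (f w).re) :
    ‖deriv f z‖ ≤ 2 * (f z).re / R := by
  set a := f z
  have ha : 0 < a.re := hre z (Metric.mem_ball_self hR)
  have hden : ∀ w : ℂ, 0 < w.re → w + conj a ≠ 0 := fun w hw h => by
    have := congrArg re h
    simp only [add_re, conj_re, zero_re] at this
    linarith
  set ψ : ℂ → ℂ := fun w => (w - a) / (w + conj a)
  have hψ : ∀ w : ℂ, 0 < w.re →
      HasDerivAt ψ ((1 * (w + conj a) - (w - a) * 1) / (w + conj a) ^ 2) w := fun w hw =>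
    ((hasDerivAt_id w).sub_const a).div ((hasDerivAt_id w).add_const _) (hden w hw)
  have hschwarz : ‖deriv (ψ ∘ f) z‖ ≤ 1 / R := by
    refine Complex.norm_deriv_le_div_of_mapsTo_ball (fun w hw => ?_) (fun w hw => ?_) hR
    · exact ((hψ _ (hre w hw)).differentiableAt.comp w
        (hf.differentiableAt (Metric.isOpen_ball.mem_nhds hw))).differentiableWithinAt
    · simpa [ψ, a, dist_eq] using (norm_sub_div_add_conj_lt_one ha (hre w hw)).le
  have hchain : deriv (ψ ∘ f) z = deriv f z / (2 * a.re) := by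
    have hfz : DifferentiableAt ℂ f z := hf.differentiableAt (Metric.isOpen_ball.mem_nhds
      (Metric.mem_ball_self hR))
    rw [((hψ a ha).comp z hfz.hasDerivAt).deriv, sub_self, zero_mul, sub_zero, one_mul, sq,
      ← div_div, div_self (hden a ha), add_conj]
    push_cast
    ring
  rw [hchain, norm_div, norm_mul, Complex.norm_ofNat, Complex.norm_real, Real.norm_eq_abs,
    abs_of_pos ha, div_le_div_iff₀ (by linarith) hR] at hschwarz
  rw [le_div_iff₀ hR]
  simpa using hschwarz

lemma norm_deriv_le_two_mul_re_div_re {f : ℂ → ℂ} (hf : DifferentiableOn ℂ f HalfPlane)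
    (hre : ∀ w ∈ HalfPlane, 0 < (f w).re) {z : ℂ} (hz : z ∈ HalfPlane) :
    ‖deriv f z‖ ≤ 2 * (f z).re / z.re :=
  norm_deriv_le_of_re_pos_on_ball hz (hf.mono (ball_re_subset_halfPlane z))
    fun w hw => hre w (ball_re_subset_halfPlane z hw)

lemma deriv_eq_mul_deriv_of_exp_eq {s : Set ℂ} (hs : IsOpen s) {φ L : ℂ → ℂ}
    (hL : DifferentiableOn ℂ L s) (hexp : ∀ z ∈ s, exp (L z) = φ z) {z : ℂ} (hz : z ∈ s) :
    deriv φ z = φ z * deriv L z := by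
  have hφ : (fun w => exp (L w)) =ᶠ[𝓝 z] φ := eventuallyEq_of_mem (hs.mem_nhds hz) hexp
  rw [← hφ.deriv_eq, ((hL.differentiableAt (hs.mem_nhds hz)).hasDerivAt.cexp).deriv, hexp z hz]

lemma norm_deriv_log_bounds_of_balanced {s : Set ℂ} (hs : IsOpen s) {φ L : ℂ → ℂ}
    (hL : DifferentiableOn ℂ L s) (hexp : ∀ z ∈ s, exp (L z) = φ z) {ρ c C : ℝ}
    (hbal : ∀ ξ ∈ s, c * ‖φ ξ‖ ^ (1 - ρ) ≤ ‖deriv φ ξ‖ ∧ ‖deriv φ ξ‖ ≤ C * ‖φ ξ‖ ^ (1 - ρ))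
    {z : ℂ} (hz : z ∈ s) :
    c * Real.exp (-(ρ * (L z).re)) ≤ ‖deriv L z‖ ∧
      ‖deriv L z‖ ≤ C * Real.exp (-(ρ * (L z).re)) := by
  have hnorm : ‖φ z‖ = Real.exp (L z).re := by rw [← hexp z hz, norm_exp]
  have hrpow : ‖φ z‖ ^ (1 - ρ) = Real.exp (L z).re * Real.exp (-(ρ * (L z).re)) := by
    rw [hnorm, ← Real.exp_mul, ← Real.exp_add]
    ring_nf
  have hpos := Real.exp_pos (L z).re
  obtain ⟨hlow, hup⟩ := hbal z hz
  rw [deriv_eq_mul_deriv_of_exp_eq hs hL hexp hz, norm_mul, hrpow, hnorm] at hlow hup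
  constructor <;> nlinarith

lemma exp_mul_re_le_add_of_norm_deriv_le {s : Set ℂ} (hs : IsOpen s) (hsc : Convex ℝ s)
    {L : ℂ → ℂ} (hL : DifferentiableOn ℂ L s) {ρ B : ℝ} (hρ : 0 ≤ ρ)
    (hbound : ∀ z ∈ s, ‖deriv L z‖ ≤ B * Real.exp (-(ρ * (L z).re))) {z w : ℂ}
    (hz : z ∈ s) (hw : w ∈ s) :
    Real.exp (ρ * (L z).re) ≤ Real.exp (ρ * (L w).re) + ρ * B * ‖z - w‖ := by
  have hnorm : ∀ ζ, ‖exp (ρ * L ζ)‖ = Real.exp (ρ * (L ζ).re) := fun ζ => by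
    rw [norm_exp, re_ofReal_mul]
  have hderiv : ∀ ζ ∈ s, HasDerivAt (fun ζ => exp (ρ * L ζ)) (exp (ρ * L ζ) * (ρ * deriv L ζ)) ζ :=
    fun ζ hζ => ((hL.differentiableAt (hs.mem_nhds hζ)).hasDerivAt.const_mul (ρ : ℂ)).cexp
  have hderiv_le : ∀ ζ ∈ s, ‖deriv (fun ζ => exp (ρ * L ζ)) ζ‖ ≤ ρ * B := fun ζ hζ => by
    rw [(hderiv ζ hζ).deriv, norm_mul, norm_mul, hnorm, norm_real, Real.norm_eq_abs,
      abs_of_nonneg hρ]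
    calc Real.exp (ρ * (L ζ).re) * (ρ * ‖deriv L ζ‖)
        ≤ Real.exp (ρ * (L ζ).re) * (ρ * (B * Real.exp (-(ρ * (L ζ).re)))) := by
          gcongr; exact hbound ζ hζ
      _ = ρ * B := by rw [Real.exp_neg]; field_simp
  have hmvt := hsc.norm_image_sub_le_of_norm_deriv_le
    (fun ζ hζ => (hderiv ζ hζ).differentiableAt) hderiv_le hw hz
  have := norm_sub_norm_le (exp (ρ * L z)) (exp (ρ * L w))
  rw [hnorm, hnorm] at this
  linarith

lemma tendsto_log_add_div_atTop (k : ℝ) :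
    Tendsto (fun x : ℝ => Real.log (x + k) / x) atTop (𝓝 0) := by
  have hinv : Tendsto (fun x : ℝ => x⁻¹) atTop (𝓝 0) := tendsto_inv_atTop_zero
  have hsplit := ((Real.tendsto_log_comp_add_sub_log k).mul hinv).add
    Real.isLittleO_log_id_atTop.tendsto_div_nhds_zero
  rw [zero_mul, zero_add] at hsplit
  refine hsplit.congr' ?_
  filter_upwards [eventually_ne_atTop 0] with x hx
  simp only [id]
  field_simp
  ring

/-- The factor `u` in the lower bound costs only `log u = O(log log T)`. -/
lemma tendsto_div_log_of_exp_le_of_le_mul_exp {u : ℝ → ℝ} {a B : ℝ} (ha : 0 < a)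
    (hup : ∀ᶠ T in atTop, Real.exp (u T) ≤ B * T)
    (hlow : ∀ᶠ T in atTop, a * T ≤ u T * Real.exp (u T)) :
    Tendsto (fun T => u T / Real.log T) atTop (𝓝 1) := by
  have hB : 0 < B := by
    obtain ⟨T, hT, hTB⟩ := ((eventually_gt_atTop 0).and hup).exists
    by_contra! hB
    nlinarith [Real.exp_pos (u T)]
  have hlog := Real.tendsto_log_atTop
  have hupper : Tendsto (fun T => (Real.log T + Real.log B) / Real.log T) atTop (𝓝 1) := by
    have := (tendsto_const_nhds (x := (1 : ℝ))).add
      ((tendsto_const_nhds (x := Real.log B)).div_atTop hlog)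
    rw [add_zero] at this
    refine this.congr' ?_
    filter_upwards [hlog.eventually_gt_atTop 0] with T hT
    field_simp
  have hlower : Tendsto (fun T => (Real.log T + Real.log a
      - Real.log (Real.log T + Real.log B)) / Real.log T) atTop (𝓝 1) := by
    have := ((tendsto_const_nhds (x := (1 : ℝ))).add
      ((tendsto_const_nhds (x := Real.log a)).div_atTop hlog)).sub
      ((tendsto_log_add_div_atTop (Real.log B)).comp hlog)
    rw [add_zero, sub_zero] at this
    refine this.congr' ?_
    filter_upwards [hlog.eventually_gt_atTop 0] with T hT
    simp only [Function.comp]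
    field_simp
  have hbounds : ∀ᶠ T in atTop, Real.log T + Real.log a - Real.log (Real.log T + Real.log B)
      ≤ u T ∧ u T ≤ Real.log T + Real.log B := by
    filter_upwards [eventually_gt_atTop 0, hup, hlow] with T hT hTup hTlow
    have hu : 0 < u T := pos_of_mul_pos_left ((by positivity : 0 < a * T).trans_le hTlow)
      (Real.exp_pos _).le
    have hu_le : u T ≤ Real.log T + Real.log B := by
      rw [add_comm, ← Real.log_mul hB.ne' hT.ne', Real.le_log_iff_exp_le (by positivity)]
      exact hTup
    have hlog_low := Real.log_le_log (by positivity) hTlow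
    rw [Real.log_mul ha.ne' hT.ne', Real.log_mul hu.ne' (Real.exp_pos _).ne',
      Real.log_exp] at hlog_low
    exact ⟨by linarith [Real.log_le_log hu hu_le], hu_le⟩
  refine tendsto_of_tendsto_of_tendsto_of_le_of_le' hlower hupper ?_ ?_ <;>
    filter_upwards [hlog.eventually_gt_atTop 0, hbounds] with T hT hTb
  exacts [div_le_div_of_nonneg_right hTb.1 hT.le, div_le_div_of_nonneg_right hTb.2 hT.le]

lemma tendsto_mul_re_div_log {L : ℂ → ℂ} {ρ c C : ℝ} (hρ : 0 < ρ) (hc : 0 < c)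
    (hL : DifferentiableOn ℂ L HalfPlane) (hre : ∀ z ∈ HalfPlane, 0 < (L z).re)
    (hbound : ∀ z ∈ HalfPlane, c * Real.exp (-(ρ * (L z).re)) ≤ ‖deriv L z‖ ∧
      ‖deriv L z‖ ≤ C * Real.exp (-(ρ * (L z).re))) :
    Tendsto (fun T : ℝ => ρ * (L T).re / Real.log T) atTop (𝓝 1) := by
  have h1 : (1 : ℂ) ∈ HalfPlane := by simpa using ofReal_mem_halfPlane one_pos
  have hC : 0 ≤ C := nonneg_of_mul_nonneg_left ((norm_nonneg _).trans (hbound 1 h1).2)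
    (Real.exp_pos _)
  refine tendsto_div_log_of_exp_le_of_le_mul_exp (a := ρ * c / 2)
    (B := Real.exp (ρ * (L 1).re) + ρ * C) (by positivity) ?_ ?_
  · filter_upwards [eventually_ge_atTop 1] with T hT
    have := exp_mul_re_le_add_of_norm_deriv_le halfPlane_isOpen halfPlane_convex hL hρ.le
      (fun z hz => (hbound z hz).2) (ofReal_mem_halfPlane (by linarith)) h1
    have hdist : ‖(T : ℂ) - 1‖ = T - 1 := by
      rw [← ofReal_one, ← ofReal_sub, norm_real, Real.norm_eq_abs, abs_of_nonneg (by linarith)]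
    rw [hdist] at this
    nlinarith [Real.exp_pos (ρ * (L 1).re), mul_nonneg hρ.le hC]
  · filter_upwards [eventually_gt_atTop 0] with T hT
    have hT' := ofReal_mem_halfPlane hT
    have hschwarz := (hbound T hT').1.trans
      (norm_deriv_le_two_mul_re_div_re hL hre hT')
    rw [ofReal_re, le_div_iff₀ hT, Real.exp_neg] at hschwarz
    have hexp := Real.exp_pos (ρ * (L T).re)
    field_simp at hschwarz
    nlinarith

lemma abs_log_sub_log_le_of_mul_le_of_le_mul {a b x y : ℝ} (ha : 0 < a) (hx : 0 < x)
    (hlow : a * x ≤ y) (hup : y ≤ b * x) :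
    |Real.log y - Real.log x| ≤ |Real.log a| + |Real.log b| := by
  have hy : 0 < y := (mul_pos ha hx).trans_le hlow
  have hb : 0 < b := pos_of_mul_pos_left (hy.trans_le hup) hx.le
  have h1 := Real.log_le_log (mul_pos ha hx) hlow
  have h2 := Real.log_le_log hy hup
  rw [Real.log_mul ha.ne' hx.ne'] at h1
  rw [Real.log_mul hb.ne' hx.ne'] at h2
  rw [abs_le]
  constructor <;> linarith [neg_abs_le (Real.log a), le_abs_self (Real.log b),
    abs_nonneg (Real.log a), abs_nonneg (Real.log b)]

lemma Cond42.abs_log_norm_sub_le {φ : ℂ → ℂ} {M γ T : ℝ} (h : Cond42 φ M γ) (hT : γ ≤ T)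
    {ξ ξ' : ℂ} (hξ : ξ ∈ Q T \ Q (T / 8)) (hξ' : ξ' ∈ Q T \ Q (T / 8)) (h0 : φ ξ ≠ 0)
    (h0' : φ ξ' ≠ 0) : |Real.log ‖φ ξ‖ - Real.log ‖φ ξ'‖| ≤ Real.log M := by
  have hpos := norm_pos_iff.2 h0
  have hpos' := norm_pos_iff.2 h0'
  have hM : 0 < M := pos_of_mul_pos_left (hpos.trans_le (h T hT ξ hξ ξ' hξ')) hpos'.le
  have h1 := Real.log_le_log hpos (h T hT ξ hξ ξ' hξ')
  have h2 := Real.log_le_log hpos' (h T hT ξ' hξ' ξ hξ)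
  rw [Real.log_mul hM.ne' hpos'.ne'] at h1
  rw [Real.log_mul hM.ne' hpos.ne'] at h2
  rw [abs_le]
  constructor <;> linarith

lemma ofReal_mem_Q_sdiff {T : ℝ} (hT : 0 < T) : (T : ℂ) ∈ Q T \ Q (T / 8) := by
  refine ⟨?_, fun h => ?_⟩
  · refine ⟨?_, ?_, ?_, ?_⟩ <;> simp only [ofReal_re, ofReal_im] <;> linarith
  · have := h.2.1
    simp only [ofReal_re] at this
    linarith

lemma mem_Q_sdiff_of_mem_Iset {T y : ℝ} (hT : 1 < 4 * T) (hy : y ∈ Iset) {w : ℂ}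
    (hre : w.re = 1) (him : w.im = T * y) : w ∈ Q T \ Q (T / 8) := by
  have hT0 : 0 < T := by linarith
  have hy' : 1 ≤ |y| ∧ |y| ≤ 2 := by
    rcases hy with ⟨h1, h2⟩ | ⟨h1, h2⟩
    · rw [abs_of_neg (by linarith)]; constructor <;> linarith
    · rw [abs_of_pos (by linarith)]; constructor <;> linarith
  have him_abs : T ≤ |w.im| ∧ |w.im| ≤ 2 * T := by
    rw [him, abs_mul, abs_of_pos hT0]
    constructor <;> nlinarith
  refine ⟨⟨?_, ?_, ?_, ?_⟩, fun h => ?_⟩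
  · rw [hre]; norm_num
  · rw [hre]; exact hT
  · linarith [neg_abs_le w.im]
  · linarith [le_abs_self w.im]
  · have := abs_lt.2 ⟨h.2.2.1, h.2.2.2⟩
    linarith

lemma norm_deriv_resc {φ : ℂ → ℂ} {T : ℝ} (hT : 0 < T) (z : ℂ) :
    ‖deriv (resc φ T) z‖ = T * ‖deriv φ (T * z)‖ / ‖φ T‖ := by
  have : deriv (resc φ T) z = (T : ℂ) * deriv φ (T * z) / ((‖φ T‖ : ℝ) : ℂ) := by
    unfold resc
    rw [deriv_div_const, deriv_comp_mul_left, smul_eq_mul]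
  rw [this, norm_div, norm_mul, norm_real, norm_real, Real.norm_eq_abs, abs_of_pos hT, norm_norm]

lemma norm_deriv_resc_pos_and_abs_log_sub_le {φ : ℂ → ℂ} {M γ ρ c C : ℝ} (h42 : Cond42 φ M γ)
    (hc : 0 < c)
    (hbal : ∀ ξ ∈ HalfPlane, c * ‖φ ξ‖ ^ (1 - ρ) ≤ ‖deriv φ ξ‖ ∧
      ‖deriv φ ξ‖ ≤ C * ‖φ ξ‖ ^ (1 - ρ))
    (hφ : ∀ ξ ∈ HalfPlane, φ ξ ≠ 0) {T y : ℝ} (hγT : γ ≤ T) (hT : 1 ≤ T) (hy : y ∈ Iset) :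
    0 < ‖deriv (resc φ T) (((1 / T : ℝ) : ℂ) + y * I)‖ ∧
      |Real.log ‖deriv (resc φ T) (((1 / T : ℝ) : ℂ) + y * I)‖
        - (Real.log T - ρ * Real.log ‖φ T‖)|
      ≤ |Real.log c| + |Real.log C| + |1 - ρ| * Real.log M := by
  have hT0 : 0 < T := by linarith
  set w : ℂ := T * (((1 / T : ℝ) : ℂ) + y * I)
  have hw_re : w.re = 1 := by simp [w, hT0.ne']
  have hw_im : w.im = T * y := by simp [w]
  have hwQ := mem_Q_sdiff_of_mem_Iset (by linarith) hy hw_re hw_im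
  have hw : w ∈ HalfPlane := hwQ.1.1
  have hφw := norm_pos_iff.2 (hφ w hw)
  have hφT := norm_pos_iff.2 (hφ T (ofReal_mem_halfPlane hT0))
  have hφ'w : 0 < ‖deriv φ w‖ := (mul_pos hc (Real.rpow_pos_of_pos hφw _)).trans_le (hbal w hw).1
  have hbal_log : |Real.log ‖deriv φ w‖ - (1 - ρ) * Real.log ‖φ w‖| ≤
      |Real.log c| + |Real.log C| := by
    rw [← Real.log_rpow hφw]
    exact abs_log_sub_log_le_of_mul_le_of_le_mul hc (Real.rpow_pos_of_pos hφw _)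
      (hbal w hw).1 (hbal w hw).2
  have h42_log := h42.abs_log_norm_sub_le hγT hwQ (ofReal_mem_Q_sdiff hT0) (hφ w hw)
    (hφ T (ofReal_mem_halfPlane hT0))
  rw [norm_deriv_resc hT0]
  refine ⟨by positivity, ?_⟩
  rw [Real.log_div (by positivity) hφT.ne',
    Real.log_mul hT0.ne' hφ'w.ne']
  calc |Real.log T + Real.log ‖deriv φ w‖ - Real.log ‖φ T‖ - (Real.log T - ρ * Real.log ‖φ T‖)|
      = |(Real.log ‖deriv φ w‖ - (1 - ρ) * Real.log ‖φ w‖)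
          + (1 - ρ) * (Real.log ‖φ w‖ - Real.log ‖φ T‖)| := by ring_nf
    _ ≤ |Real.log c| + |Real.log C| + |1 - ρ| * Real.log M := by
      refine (abs_add_le _ _).trans (add_le_add hbal_log ?_)
      rw [abs_mul]
      exact mul_le_mul_of_nonneg_left h42_log (abs_nonneg _)

lemma abs_log_setIntegral_sub_le {α : Type*} [MeasurableSpace α] {μ : Measure α} {S : Set α}
    (hS : MeasurableSet S) (hμ0 : μ S ≠ 0) (hμ : μ S ≠ ⊤) {g : α → ℝ}
    (hg : AEStronglyMeasurable g μ) {m D : ℝ} (hpos : ∀ y ∈ S, 0 < g y)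
    (hlog : ∀ y ∈ S, |Real.log (g y) - m| ≤ D) :
    |Real.log (∫ y in S, g y ∂μ) - Real.log (μ.real S) - m| ≤ D := by
  have hbounds : ∀ y ∈ S, Real.exp (m - D) ≤ g y ∧ g y ≤ Real.exp (m + D) := fun y hy => by
    rw [← Real.exp_log (hpos y hy), Real.exp_le_exp, Real.exp_le_exp]
    have := abs_le.1 (hlog y hy)
    constructor <;> linarith
  have hint : IntegrableOn g S μ := Measure.integrableOn_of_bounded hμ hg
    ((ae_restrict_iff' hS).2 (ae_of_all _ fun y hy => by
      rw [Real.norm_of_nonneg (hpos y hy).le]; exact (hbounds y hy).2))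
  have hvol : 0 < μ.real S := ENNReal.toReal_pos hμ0 hμ
  have hlow : Real.exp (m - D) * μ.real S ≤ ∫ y in S, g y ∂μ :=
    setIntegral_ge_of_const_le_real hS hμ (fun y hy => (hbounds y hy).1) hint
  have hup : ∫ y in S, g y ∂μ ≤ Real.exp (m + D) * μ.real S := by
    have := setIntegral_mono_on hint (integrableOn_const hμ) hS fun y hy => (hbounds y hy).2
    rwa [setIntegral_const, smul_eq_mul, mul_comm] at this
  have hlog_low := Real.log_le_log (mul_pos (Real.exp_pos _) hvol) hlow
  have hlog_up := Real.log_le_log ((mul_pos (Real.exp_pos _) hvol).trans_le hlow) hup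
  rw [Real.log_mul (Real.exp_pos _).ne' hvol.ne', Real.log_exp] at hlog_low hlog_up
  rw [abs_le]
  constructor <;> linarith

lemma volume_Iset : volume Iset = 2 := by
  have hdisj : Disjoint (Icc (-2 : ℝ) (-1)) (Icc 1 2) :=
    Set.disjoint_left.2 fun x hx hx' => by linarith [hx.2, hx'.1]
  rw [Iset, measure_union hdisj measurableSet_Icc, Real.volume_Icc, Real.volume_Icc,
    ← ENNReal.ofReal_add] <;> norm_num

lemma measurableSet_Iset : MeasurableSet Iset := measurableSet_Icc.union measurableSet_Icc

lemma abs_log_integral_resc_sub_le {φ : ℂ → ℂ} {M γ ρ c C : ℝ} (h42 : Cond42 φ M γ)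
    (hc : 0 < c)
    (hbal : ∀ ξ ∈ HalfPlane, c * ‖φ ξ‖ ^ (1 - ρ) ≤ ‖deriv φ ξ‖ ∧
      ‖deriv φ ξ‖ ≤ C * ‖φ ξ‖ ^ (1 - ρ))
    (hφ : ∀ ξ ∈ HalfPlane, φ ξ ≠ 0) {T : ℝ} (hγT : γ ≤ T) (hT : 1 ≤ T) (t : ℝ) :
    |Real.log (∫ y in Iset, ‖deriv (resc φ T) (((1 / T : ℝ) : ℂ) + y * I)‖ ^ t)
        - Real.log 2 - t * (Real.log T - ρ * Real.log ‖φ T‖)|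
      ≤ |t| * (|Real.log c| + |Real.log C| + |1 - ρ| * Real.log M) := by
  have hpt := fun y (hy : y ∈ Iset) =>
    norm_deriv_resc_pos_and_abs_log_sub_le h42 hc hbal hφ hγT hT hy
  have hvol : volume.real Iset = 2 := by simp [measureReal_def, volume_Iset]
  rw [← hvol]
  refine abs_log_setIntegral_sub_le measurableSet_Iset ?_ ?_ ?_
    (fun y hy => Real.rpow_pos_of_pos (hpt y hy).1 t) fun y hy => ?_
  · simp [volume_Iset]
  · simp [volume_Iset]
  · exact (((measurable_deriv _).comp (by fun_prop)).norm.pow_const t).aestronglyMeasurable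
  · rw [Real.log_rpow (hpt y hy).1, ← mul_sub, abs_mul]
    exact mul_le_mul_of_nonneg_left (hpt y hy).2 (abs_nonneg t)

lemma tendsto_div_log_of_abs_sub_le {v w : ℝ → ℝ} {l D : ℝ}
    (hw : Tendsto (fun T => w T / Real.log T) atTop (𝓝 l))
    (hvw : ∀ᶠ T in atTop, |v T - w T| ≤ D) :
    Tendsto (fun T => v T / Real.log T) atTop (𝓝 l) := by
  have hD : Tendsto (fun T => D / Real.log T) atTop (𝓝 0) :=
    tendsto_const_nhds.div_atTop Real.tendsto_log_atTop
  have hdiff : Tendsto (fun T => (v T - w T) / Real.log T) atTop (𝓝 0) := by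
    refine tendsto_of_tendsto_of_tendsto_of_le_of_le' (by simpa using hD.neg) hD ?_ ?_ <;>
      filter_upwards [Real.tendsto_log_atTop.eventually_gt_atTop 0, hvw] with T hT hTD <;>
      rw [abs_le] at hTD
    · rw [← neg_div]; exact div_le_div_of_nonneg_right hTD.1 hT.le
    · exact div_le_div_of_nonneg_right hTD.2 hT.le
  simpa [sub_div] using hdiff.add hw

lemma betaInf_eq_zero {φ : ℂ → ℂ} {M γ ρ c C : ℝ} (h42 : Cond42 φ M γ) (hc : 0 < c)
    (hbal : ∀ ξ ∈ HalfPlane, c * ‖φ ξ‖ ^ (1 - ρ) ≤ ‖deriv φ ξ‖ ∧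
      ‖deriv φ ξ‖ ≤ C * ‖φ ξ‖ ^ (1 - ρ))
    (hφ : ∀ ξ ∈ HalfPlane, φ ξ ≠ 0)
    (hratio : Tendsto (fun T : ℝ => ρ * Real.log ‖φ T‖ / Real.log T) atTop (𝓝 1)) (t : ℝ) :
    betaInf φ t = 0 := by
  simp only [betaInf, betaT, one_div_one_div]
  refine Tendsto.limsup_eq (tendsto_div_log_of_abs_sub_le
    (w := fun T => Real.log 2 + t * (Real.log T - ρ * Real.log ‖φ T‖))
    (D := |t| * (|Real.log c| + |Real.log C| + |1 - ρ| * Real.log M)) ?_ ?_)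
  · have hmain := ((tendsto_const_nhds (x := Real.log 2)).div_atTop Real.tendsto_log_atTop).add
      (((tendsto_const_nhds (x := (1 : ℝ))).sub hratio).const_mul t)
    rw [sub_self, mul_zero, add_zero] at hmain
    refine hmain.congr' ?_
    filter_upwards [Real.tendsto_log_atTop.eventually_gt_atTop 0] with T hT
    field_simp
  · filter_upwards [eventually_ge_atTop (max γ 1)] with T hT
    rw [← sub_sub]
    exact abs_log_integral_resc_sub_le h42 hc hbal hφ (le_of_max_le_left hT)
      (le_of_max_le_right hT) t

lemma theta_eq_one_of_betaInf_eq_zero {φ : ℂ → ℂ} (h : ∀ t, betaInf φ t = 0) : Theta φ = 1 := by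
  have hset : {t : ℝ | 0 < t ∧ bInf φ t ≤ 0} = Ici 1 := by
    ext t
    simp only [mem_ofPred_eq, mem_Ici, bInf, h t]
    constructor
    · rintro ⟨-, ht⟩; linarith
    · intro ht; constructor <;> linarith
  rw [Theta, hset, csInf_Ici]

theorem balanced_growth_elementary_general (γ M : ℝ) (hγ : γ ∈ Ioo (0 : ℝ) 1)
    (φ : ℂ → ℂ)
    (himg : φ '' HalfPlane ⊆ {z : ℂ | Real.exp γ < ‖z‖})
    (h42 : Cond42 φ M γ)
    (hL : ∃ L : ℂ → ℂ, DifferentiableOn ℂ L HalfPlane ∧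
      ∀ z ∈ HalfPlane, Complex.exp (L z) = φ z)
    (ρ c C : ℝ) (hρ : 0 < ρ) (hc : 0 < c)
    (hbal : ∀ ξ ∈ HalfPlane,
      c * (‖φ ξ‖) ^ (1 - ρ) ≤ ‖deriv φ ξ‖ ∧
      ‖deriv φ ξ‖ ≤ C * (‖φ ξ‖) ^ (1 - ρ)) :
    (∀ t : ℝ, betaInf φ t = 0) ∧ (∀ t : ℝ, bInf φ t = 1 - t) ∧ Theta φ = 1 := by
  obtain ⟨L, hL, hexp⟩ := hL
  have hφ : ∀ z ∈ HalfPlane, 1 < ‖φ z‖ := fun z hz =>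
    (Real.one_lt_exp_iff.2 hγ.1).trans (himg ⟨z, hz, rfl⟩)
  have hre : ∀ z ∈ HalfPlane, (L z).re = Real.log ‖φ z‖ := fun z hz => by
    rw [← hexp z hz, norm_exp, Real.log_exp]
  have hφ0 : ∀ z ∈ HalfPlane, φ z ≠ 0 := fun z hz => norm_pos_iff.1 (one_pos.trans (hφ z hz))
  have hratio : Tendsto (fun T : ℝ => ρ * Real.log ‖φ T‖ / Real.log T) atTop (𝓝 1) := by
    refine (tendsto_mul_re_div_log hρ hc hL (fun z hz => (hre z hz).symm ▸ Real.log_pos (hφ z hz))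
      fun z hz => norm_deriv_log_bounds_of_balanced halfPlane_isOpen hL hexp hbal hz).congr' ?_
    filter_upwards [eventually_gt_atTop 0] with T hT
    rw [hre T (ofReal_mem_halfPlane hT)]
  have hβ : ∀ t, betaInf φ t = 0 := betaInf_eq_zero h42 hc hbal hφ0 hratio
  exact ⟨hβ, fun t => by rw [bInf, hβ t]; ring, theta_eq_one_of_betaInf_eq_zero hβ⟩

/-- **Balanced growth implies trivial spectrum.**  If `φ` is injective holomorphic on `ℍ`,
satisfies (4.2), has image in `{|z| > e^γ}`, admits a holomorphic logarithm, and satisfies the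
balanced growth condition `|φ′(ξ)| ≍ |φ(ξ)|^{1−ρ}` on `ℍ` for some `ρ > 0`, then `β_∞ ≡ 0`;
consequently `b_∞(t) = 1 − t` for all `t` and `Θ = 1`. -/
theorem balanced_growth_elementary (γ M : ℝ) (hγ : γ ∈ Ioo (0 : ℝ) 1) (hM : 1 ≤ M)
    (φ : ℂ → ℂ) (hd : DifferentiableOn ℂ φ HalfPlane) (hi : InjOn φ HalfPlane)
    (himg : φ '' HalfPlane ⊆ {z : ℂ | Real.exp γ < ‖z‖})
    (h42 : Cond42 φ M γ)
    (hL : ∃ L : ℂ → ℂ, DifferentiableOn ℂ L HalfPlane ∧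
      ∀ z ∈ HalfPlane, Complex.exp (L z) = φ z)
    (ρ c C : ℝ) (hρ : 0 < ρ) (hc : 0 < c) (hcC : c ≤ C)
    (hbal : ∀ ξ ∈ HalfPlane,
      c * (‖φ ξ‖) ^ (1 - ρ) ≤ ‖deriv φ ξ‖ ∧
      ‖deriv φ ξ‖ ≤ C * (‖φ ξ‖) ^ (1 - ρ)) :
    (∀ t : ℝ, betaInf φ t = 0) ∧ (∀ t : ℝ, bInf φ t = 1 - t) ∧ Theta φ = 1 :=
  balanced_growth_elementary_general γ M hγ φ himg h42 hL ρ c C hρ hc hbal
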